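/- For every d-dimensional sand automaton, F-surjectivity implies surjectivity: if every finite configuration has a finite preimage under the global function f, then every configuration has a preimage under f. -/

import Mathlib

/-- The extended integers `ℤ ∪ {-∞, +∞}`. -/
abbrev EZ : Type := WithBot (WithTop ℤ)

/-- Embedding of `ℤ` into the extended integers. -/
def finVal (n : ℤ) : EZ := ((n : WithTop ℤ) : EZ)

/-- The integer value of a finite extended integer (`0` on `±∞`). -/
def valZ (x : EZ) : ℤ := WithBot.recBotCoe 0 (fun y => WithTop.recTopCoe 0 id y) x

/-- The measuring device `β_l^m`. -/
noncomputable def beta (l : ℕ) (m : ℤ) (n : EZ) : EZ :=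
  if finVal (m + (l : ℤ)) < n then ⊤
  else if n < finVal (m - (l : ℤ)) then ⊥
  else WithBot.map (WithTop.map (fun k => k - m)) n

/-- Reference height: the value of `x` if finite, `0` if `x = ±∞`. -/
def refH (x : EZ) : ℤ := if x = ⊥ ∨ x = ⊤ then 0 else valZ x

/-- `d`-dimensional sandpile configurations. -/
def ConfigD (d : ℕ) : Type := (Fin d → ℤ) → EZ

/-- The index set of a `d`-dimensional neighborhood of radius `r`: the nonzero
vectors `v ∈ [-r, r]^d`. -/
def NIdx (d r : ℕ) : Type := {v : Fin d → ℤ // (∀ j, |v j| ≤ (r : ℤ)) ∧ v ≠ 0}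

/-- The neighborhood tuple `d_r^i(c) = (β_r^{c_i}(c_{i+v}))_{v ∈ [-r,r]^d, v ≠ 0}`
(with reference height `0` when `c_i = ±∞`). -/
noncomputable def nbhdD (d r : ℕ) (c : ConfigD d) (i : Fin d → ℤ) : NIdx d r → EZ :=
  fun v => beta r (refH (c i)) (c (fun t => i t + v.1 t))

/-- The global function of the `d`-dimensional sand automaton of radius `r`
with local rule `lam`. -/
noncomputable def globalD (d r : ℕ) (lam : (NIdx d r → EZ) → ℤ) (c : ConfigD d) : ConfigD d :=
  fun i => if c i = ⊥ ∨ c i = ⊤ then c i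
    else finVal (valZ (c i) + lam (nbhdD d r c i))

/-- Finite `d`-dimensional configurations: `c_i = 0` whenever the infinity norm
`|i| = max_j |i_j|` is at least some `k`. -/
def FiniteD {d : ℕ} (c : ConfigD d) : Prop :=
  ∃ k : ℕ, ∀ i : Fin d → ℤ, (∃ j, (k : ℤ) ≤ |i j|) → c i = finVal 0

/-- Periodic `d`-dimensional configurations: invariant under translation by `p · e_j`
for some integer `p ≥ 1` and every standard basis vector `e_j`. -/
def PeriodicD {d : ℕ} (c : ConfigD d) : Prop :=
  ∃ p : ℤ, 1 ≤ p ∧ ∀ (i : Fin d → ℤ) (j : Fin d),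
    c (fun t => i t + if t = j then p else 0) = c i

/-!
Truncate a configuration `c` to the finite configurations `c_n` that agree with `c` on the
box `|i| < n` and are `0` outside, and pick finite preimages `p_n`. A preimage can take only
finitely many values at a site `i`: `±∞` or a height within `r` of `c_i`, since `λ` moves sand
by at most `r` and infinite heights are fixed. Hence the `p_n` converge sitewise along an
ultrafilter, and since the automaton is local, the limit is a preimage of `c`.
-/

open Filter

lemma finVal_ne_bot (k : ℤ) : finVal k ≠ ⊥ := WithBot.coe_ne_bot

lemma finVal_ne_top (k : ℤ) : finVal k ≠ ⊤ := by
  simp [finVal]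

lemma refH_finVal (k : ℤ) : refH (finVal k) = k := by
  simp only [refH, finVal_ne_bot, finVal_ne_top, or_self, if_false]
  rfl

lemma finVal_valZ {x : EZ} (hb : x ≠ ⊥) (ht : x ≠ ⊤) : finVal (valZ x) = x := by
  rcases x with _ | _ | k
  · exact absurd rfl hb
  · exact absurd rfl ht
  · rfl

instance NIdx.finite (d r : ℕ) : Finite (NIdx d r) :=
  Set.Finite.to_subtype <| (Set.Finite.pi fun _ => Set.finite_Icc (-(r : ℤ)) r).subset
    fun _ hv j _ => abs_le.mp (hv.1 j)

section SandAutomaton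

variable {d r : ℕ} {lam : (NIdx d r → EZ) → ℤ}

lemma globalD_apply_congr (c₁ c₂ : ConfigD d) (i : Fin d → ℤ) (h₀ : c₁ i = c₂ i)
    (h : ∀ v : NIdx d r, c₁ (fun t => i t + v.1 t) = c₂ (fun t => i t + v.1 t)) :
    globalD d r lam c₁ i = globalD d r lam c₂ i := by
  have hn : nbhdD d r c₁ i = nbhdD d r c₂ i := funext fun v => by simp only [nbhdD, h₀, h v]
  simp only [globalD, h₀, hn]

lemma finite_setOf_apply_of_globalD_apply_eq (hlam : ∀ v, -(r : ℤ) ≤ lam v ∧ lam v ≤ r)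
    (i : Fin d → ℤ) (y : EZ) :
    {x | ∃ c : ConfigD d, c i = x ∧ globalD d r lam c i = y}.Finite := by
  refine (((Set.finite_Icc (refH y - r) (refH y + r)).image finVal).insert ⊤ |>.insert ⊥).subset ?_
  rintro _ ⟨c, rfl, hc⟩
  by_cases hinf : c i = ⊥ ∨ c i = ⊤
  · rcases hinf with h | h <;> simp [h]
  · have hy : y = finVal (valZ (c i) + lam (nbhdD d r c i)) := by
      rw [← hc, globalD, if_neg hinf]
    have hbound := hlam (nbhdD d r c i)
    refine Or.inr (Or.inr ⟨valZ (c i), ?_, finVal_valZ (by tauto) (by tauto)⟩)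
    rw [hy, refH_finVal, Set.mem_Icc]
    omega

/-- The image of a sand automaton is closed for the product of discrete topologies. -/
lemma exists_globalD_eq_of_eventually {ι : Type*} (hlam : ∀ v, -(r : ℤ) ≤ lam v ∧ lam v ≤ r)
    (U : Ultrafilter ι) (p : ι → ConfigD d) (c : ConfigD d)
    (hp : ∀ i, ∀ᶠ n in (U : Filter ι), globalD d r lam (p n) i = c i) :
    ∃ c', globalD d r lam c' = c := by
  have hlim : ∀ i, ∃ x, ∀ᶠ n in (U : Filter ι), p n i = x := by
    intro i
    obtain ⟨x, -, hx⟩ := Ultrafilter.eq_pure_of_finite_mem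
      (finite_setOf_apply_of_globalD_apply_eq hlam i (c i)) (f := U.map fun n => p n i)
      ((hp i).mono fun n hn => ⟨p n, rfl, hn⟩)
    exact ⟨x, show {x} ∈ U.map fun n => p n i from hx ▸ Set.mem_singleton x⟩
  choose c' hc' using hlim
  refine ⟨c', funext fun i => ?_⟩
  obtain ⟨n, hi, hn, hv⟩ :=
    ((hp i).and ((hc' i).and (eventually_all.mpr fun v : NIdx d r => hc' _))).exists
  rw [globalD_apply_congr c' (p n) i hn.symm fun v => (hv v).symm, hi]

end SandAutomaton

def truncate {d : ℕ} (c : ConfigD d) (n : ℕ) : ConfigD d :=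
  fun i => if ∀ t, |i t| < (n : ℤ) then c i else finVal 0

lemma finiteD_truncate {d : ℕ} (c : ConfigD d) (n : ℕ) : FiniteD (truncate c n) :=
  ⟨n, fun _ ⟨j, hj⟩ => if_neg fun h => (h j).not_ge hj⟩

lemma eventually_truncate_apply_eq {d : ℕ} (c : ConfigD d) (i : Fin d → ℤ) :
    ∀ᶠ n in atTop, truncate c n i = c i := by
  filter_upwards [eventually_all.mpr fun t =>
    tendsto_natCast_atTop_atTop.eventually_gt_atTop |i t|] with n hn
  exact if_pos hn

theorem F_surjective_implies_surjective_general
    (d r : ℕ)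
    (lam : (NIdx d r → EZ) → ℤ)
    (hlam : ∀ v, -(r : ℤ) ≤ lam v ∧ lam v ≤ (r : ℤ))
    (hFsurj : ∀ c : ConfigD d, FiniteD c → ∃ c', FiniteD c' ∧ globalD d r lam c' = c) :
    Function.Surjective (globalD d r lam) := by
  intro c
  choose p _ hp using fun n => hFsurj (truncate c n) (finiteD_truncate c n)
  refine exists_globalD_eq_of_eventually hlam (Ultrafilter.of atTop) p c fun i => ?_
  filter_upwards [Ultrafilter.of_le atTop (eventually_truncate_apply_eq c i)] with n hn
  rw [hp n, hn]

/-- For every `d`-dimensional sand automaton (dimension `d ≥ 1`, radius `r ≥ 1`, local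
rule `lam` taking values in `[-r, r]`), `F`-surjectivity implies surjectivity: if every
finite configuration has a finite preimage under the global function, then every
configuration has a preimage. -/
theorem F_surjective_implies_surjective
    (d r : ℕ) (hd : 1 ≤ d) (hr : 1 ≤ r)
    (lam : (NIdx d r → EZ) → ℤ)
    (hlam : ∀ v, -(r : ℤ) ≤ lam v ∧ lam v ≤ (r : ℤ))
    (hFsurj : ∀ c : ConfigD d, FiniteD c → ∃ c', FiniteD c' ∧ globalD d r lam c' = c) :
    Function.Surjective (globalD d r lam) :=
  F_surjective_implies_surjective_general d r lam hlam hFsurj
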